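/- Let P : [0, l] → ℝ be convex and differentiable and suppose c ≤ c'. If Δr ↦ P(Δr₃ − Δr) + c·Δr is increasing on [0, ε] for some ε > 0, then Δr ↦ P(Δr₃ − Δr) + c'·Δr is increasing for all Δr ∈ [0, Δr₃]. -/

import Mathlib

/-!
Raising the penalty from `c` to `c'` adds the nondecreasing term `(c' - c) Δr`, so the function
stays strictly increasing on `[0, ε]`; and `Δr ↦ P (Δr₃ - Δr) + c' Δr` is convex on `[0, Δr₃]`.
A convex function that increases on an initial piece `[a, b]` of its domain keeps increasing
afterwards, because `f a < f b` already forces strict monotonicity from `b` on.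
-/

open Set

theorem ConvexOn.strictMonoOn_inter_Ici_of_strictMonoOn_Icc {𝕜 : Type*} [Field 𝕜] [LinearOrder 𝕜]
    [IsStrictOrderedRing 𝕜] {s : Set 𝕜} {f : 𝕜 → 𝕜} {a b : 𝕜} (hf : ConvexOn 𝕜 s f)
    (ha : a ∈ s) (hb : b ∈ s) (hab : a < b) (h : StrictMonoOn f (Icc a b)) :
    StrictMonoOn f (s ∩ Ici a) := by
  have hsplit : s ∩ Ici a = Icc a b ∪ s ∩ Ici b := by
    ext x
    constructor
    · rintro ⟨hxs, hax⟩
      rcases le_total x b with hxb | hbx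
      exacts [Or.inl ⟨hax, hxb⟩, Or.inr ⟨hxs, hbx⟩]
    · rintro (⟨hax, hxb⟩ | ⟨hxs, hbx⟩)
      exacts [⟨hf.1.ordConnected.out ha hb ⟨hax, hxb⟩, hax⟩, ⟨hxs, hab.le.trans hbx⟩]
  have hfab : f a < f b := h (left_mem_Icc.2 hab.le) (right_mem_Icc.2 hab.le) hab
  rw [hsplit]
  exact h.union (hf.strictMonoOn ha hab hfab) (isGreatest_Icc hab.le)
    ⟨⟨hb, le_rfl⟩, fun _ hx => hx.2⟩

theorem ConvexOn.comp_sub_left {𝕜 E β : Type*} [Field 𝕜] [LinearOrder 𝕜] [IsStrictOrderedRing 𝕜]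
    [AddCommGroup E] [Module 𝕜 E] [AddCommMonoid β] [PartialOrder β] [SMul 𝕜 β]
    {s : Set E} {f : E → β} (hf : ConvexOn 𝕜 s f) (d : E) :
    ConvexOn 𝕜 ((d - ·) ⁻¹' s) (fun x => f (d - x)) :=
  hf.comp_affineMap (AffineMap.const 𝕜 E d - (LinearMap.id : E →ₗ[𝕜] E).toAffineMap)

theorem convexOn_Icc_comp_sub_add_mul {P : ℝ → ℝ} {l d : ℝ} (hP : ConvexOn ℝ (Icc 0 l) P)
    (hd : d ≤ l) (c : ℝ) : ConvexOn ℝ (Icc 0 d) (fun t => P (d - t) + c * t) := by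
  have hsub : Icc 0 d ⊆ (d - ·) ⁻¹' Icc 0 l := fun t ht => ⟨by linarith [ht.2], by linarith [ht.1]⟩
  exact ((hP.comp_sub_left d).subset hsub (convex_Icc 0 d)).add
    ((LinearMap.mulLeft ℝ c).convexOn (convex_Icc 0 d))

theorem stmt_15_general (P : ℝ → ℝ) (l c c' Δr₃ ε : ℝ)
    (hconv : ConvexOn ℝ (Icc 0 l) P)
    (hcc' : c ≤ c')
    (h3 : Δr₃ ∈ Icc 0 l)
    (hε : 0 < ε) (hεΔ : ε ≤ Δr₃)
    (hinc : StrictMonoOn (fun Δr => P (Δr₃ - Δr) + c * Δr) (Icc 0 ε)) :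
    StrictMonoOn (fun Δr => P (Δr₃ - Δr) + c' * Δr) (Icc 0 Δr₃) := by
  have hinc' : StrictMonoOn (fun Δr => P (Δr₃ - Δr) + c' * Δr) (Icc 0 ε) := by
    have hmono : Monotone fun Δr : ℝ => (c' - c) * Δr := monotone_id.const_mul (sub_nonneg.2 hcc')
    convert hinc.add_monotone (hmono.monotoneOn _) using 2 with Δr
    ring
  have hconv' := convexOn_Icc_comp_sub_add_mul hconv h3.2 c'
  have hglobal :=
    hconv'.strictMonoOn_inter_Ici_of_strictMonoOn_Icc (left_mem_Icc.2 h3.1) ⟨hε.le, hεΔ⟩ hε hinc'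
  exact hglobal.mono fun x hx => ⟨hx, hx.1⟩

/-- If moving load back was unprofitable for penalty `c` (the function
`Δr ↦ P(Δr₃ − Δr) + c·Δr` increases on `[0, ε]`), then for any larger penalty
`c' ≥ c` the function `Δr ↦ P(Δr₃ − Δr) + c'·Δr` increases on all of `[0, Δr₃]`. -/
theorem stmt_15 (P : ℝ → ℝ) (l c c' Δr₃ ε : ℝ)
    (hdiff : Differentiable ℝ P)
    (hconv : ConvexOn ℝ (Icc 0 l) P)
    (hcc' : c ≤ c')
    (h3 : Δr₃ ∈ Icc 0 l)
    (hε : 0 < ε) (hεΔ : ε ≤ Δr₃)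
    (hinc : StrictMonoOn (fun Δr => P (Δr₃ - Δr) + c * Δr) (Icc 0 ε)) :
    StrictMonoOn (fun Δr => P (Δr₃ - Δr) + c' * Δr) (Icc 0 Δr₃) :=
  stmt_15_general P l c c' Δr₃ ε hconv hcc' h3 hε hεΔ hinc
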